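/- Fix 0 < c < 1. Let G be a connected graph with minimum degree δ = cn, adjacency eigenvalues λ₁ ≥ ⋯ ≥ λₙ, λ = max{|λ₂|,|λₙ|}, and normalized Perron eigenvector ν with minimum entry ν_min, satisfying 2λ₁ν_min²cn > λ. Then for any two vertices v, v′ (whose neighborhoods are G(v), G(v′)), the number of edges between their neighborhoods satisfies e(G(v), G(v′)) ≥ cn(λ₁cnν_min² − λ). -/

import Mathlib

/-!
Perron expander mixing lemma: write a vector `x` as `⟪x, ν⟫ ν` plus a part orthogonal to the
Perron vector `ν`. In an orthonormal eigenbasis of `A` the orthogonal part only meets eigenvalues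
of modulus at most `λ = max (|λ₂|, |λₙ|)`: an eigenvalue of larger modulus must be `λ₁` and
simple, so its eigenvector is a multiple of `ν`. For indicator vectors this gives
`|e(S, T) - λ₁ ⟪1_S, ν⟫ ⟪1_T, ν⟫| ≤ λ √(|S| |T|)`, and `⟪1_S, ν⟫ ≥ ν_min |S|` turns it into
`e(S, T) ≥ f (√(|S| |T|))` with `f p = λ₁ ν_min² p² - λ p`. Since `2 λ₁ ν_min² cn > λ`, `f` is
increasing on `[cn, ∞)`, and both neighbourhoods have at least `cn` vertices.
-/

open Matrix Finset
open scoped RealInnerProductSpace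

section Spectral

variable {ι E : Type*} [Fintype ι] [NormedAddCommGroup E] [InnerProductSpace ℝ E]
  {T : E →ₗ[ℝ] E} (b : OrthonormalBasis ι ℝ E) {μ : ι → ℝ} (hb : ∀ i, T (b i) = μ i • b i)
include hb

theorem inner_map_eq_sum_eigenvalue_mul (x y : E) :
    ⟪x, T y⟫ = ∑ i, μ i * (⟪x, b i⟫ * ⟪b i, y⟫) := by
  conv_lhs => rw [← b.sum_repr' y]
  simp only [map_sum, map_smul, hb, inner_sum, real_inner_smul_right]
  exact Finset.sum_congr rfl fun i _ => by ring

theorem abs_inner_map_le_of_abs_eigenvalue_le {x : E} {r : ℝ} (hr : 0 ≤ r)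
    (h : ∀ i, ⟪x, b i⟫ ≠ 0 → |μ i| ≤ r) (y : E) : |⟪x, T y⟫| ≤ r * (‖x‖ * ‖y‖) := by
  have hnorm : ∀ z : E, √(∑ i, |⟪z, b i⟫| ^ 2) = ‖z‖ := fun z => by
    simp only [sq_abs, b.sum_sq_inner_left, Real.sqrt_sq (norm_nonneg z)]
  calc |⟪x, T y⟫| ≤ ∑ i, |μ i| * (|⟪x, b i⟫| * |⟪b i, y⟫|) := by
        rw [inner_map_eq_sum_eigenvalue_mul b hb]
        exact (abs_sum_le_sum_abs _ _).trans_eq (by simp only [abs_mul])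
    _ ≤ ∑ i, r * (|⟪x, b i⟫| * |⟪b i, y⟫|) := Finset.sum_le_sum fun i _ => by
        by_cases hi : ⟪x, b i⟫ = 0
        · simp [hi]
        · exact mul_le_mul_of_nonneg_right (h i hi) (by positivity)
    _ ≤ r * (‖x‖ * ‖y‖) := by
        rw [← Finset.mul_sum]
        gcongr
        calc ∑ i, |⟪x, b i⟫| * |⟪b i, y⟫| = ∑ i, |⟪x, b i⟫| * |⟪y, b i⟫| := by
              simp only [real_inner_comm y]
          _ ≤ _ := Real.sum_mul_le_sqrt_mul_sqrt _ _ _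
          _ = ‖x‖ * ‖y‖ := by rw [hnorm, hnorm]

variable (hT : T.IsSymmetric) {ν : E} {m : ℝ} (hν : T ν = m • ν)
include hT hν

theorem inner_eigenvector_eq_zero_of_ne {j : ι} (h : μ j ≠ m) : ⟪b j, ν⟫ = 0 := by
  have hμm : μ j * ⟪b j, ν⟫ = m * ⟪b j, ν⟫ := by
    rw [← real_inner_smul_left, ← hb, hT, hν, real_inner_smul_right]
  by_contra h0
  exact h (mul_right_cancel₀ h0 hμm)

theorem inner_basis_eq_zero_of_inner_eigenvector_eq_zero (hν0 : ν ≠ 0) {i : ι}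
    (huniq : ∀ j, μ j = m → j = i) {x : E} (hx : ⟪x, ν⟫ = 0) : ⟪x, b i⟫ = 0 := by
  have hνi : ν = ⟪b i, ν⟫ • b i := by
    conv_lhs => rw [← b.sum_repr' ν]
    refine Finset.sum_eq_single i (fun j _ hji => ?_) (by simp)
    rw [inner_eigenvector_eq_zero_of_ne b hb hT hν (mt (huniq j) hji), zero_smul]
  have hbi : ⟪b i, ν⟫ ≠ 0 := fun h => hν0 (by rw [hνi, h, zero_smul])
  rw [hνi, real_inner_smul_right] at hx
  exact (mul_eq_zero.1 hx).resolve_left hbi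

theorem abs_inner_map_le_of_inner_eigenvector_eq_zero (hν0 : ν ≠ 0) {r : ℝ} (hr : 0 ≤ r)
    (hμ : ∀ i, r < |μ i| → ∀ j, μ j = m → j = i) {x : E} (hx : ⟪x, ν⟫ = 0) (y : E) :
    |⟪x, T y⟫| ≤ r * (‖x‖ * ‖y‖) :=
  abs_inner_map_le_of_abs_eigenvalue_le b hb hr (fun i hi => not_lt.1 fun hlt =>
    hi (inner_basis_eq_zero_of_inner_eigenvector_eq_zero b hb hT hν hν0 (hμ i hlt) hx)) y

end Spectral

theorem abs_inner_map_sub_le {E : Type*} [NormedAddCommGroup E] [InnerProductSpace ℝ E]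
    {T : E →ₗ[ℝ] E} (hT : T.IsSymmetric) {ν : E} {m : ℝ} (hν : T ν = m • ν) (hν1 : ‖ν‖ = 1)
    {r : ℝ} (hr : 0 ≤ r)
    (hperp : ∀ x, ⟪x, ν⟫ = 0 → ∀ y, |⟪x, T y⟫| ≤ r * (‖x‖ * ‖y‖)) (x y : E) :
    |⟪x, T y⟫ - m * (⟪x, ν⟫ * ⟪y, ν⟫)| ≤ r * (‖x‖ * ‖y‖) := by
  set K := ℝ ∙ ν
  set xperp := Kᗮ.starProjection x
  have hx : x = xperp + ⟪ν, x⟫ • ν := by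
    rw [← Submodule.starProjection_unit_singleton ℝ hν1, add_comm,
      Submodule.starProjection_add_starProjection_orthogonal]
  have hxperp : ⟪xperp, ν⟫ = 0 :=
    Submodule.inner_left_of_mem_orthogonal (Submodule.mem_span_singleton_self ν)
      (Submodule.starProjection_apply_mem _ x)
  have hsplit : ⟪x, T y⟫ - m * (⟪x, ν⟫ * ⟪y, ν⟫) = ⟪xperp, T y⟫ := by
    calc ⟪x, T y⟫ - m * (⟪x, ν⟫ * ⟪y, ν⟫)
        = ⟪xperp + ⟪ν, x⟫ • ν, T y⟫ - m * (⟪x, ν⟫ * ⟪y, ν⟫) := by rw [← hx]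
      _ = ⟪xperp, T y⟫ := by
        rw [inner_add_left, real_inner_smul_left, ← hT ν y, hν, real_inner_smul_left,
          real_inner_comm ν x, real_inner_comm ν y]
        ring
  rw [hsplit]
  calc |⟪xperp, T y⟫| ≤ r * (‖xperp‖ * ‖y‖) := hperp xperp hxperp y
    _ ≤ r * (‖x‖ * ‖y‖) := by gcongr; exact Submodule.norm_starProjection_apply_le _ x

theorem Antitone.abs_le_max_abs_of_ne_zero {n : ℕ} (hn : 1 < n) {lam : Fin n → ℝ}
    (hmono : Antitone lam) {k : Fin n} (hk : k ≠ ⟨0, by omega⟩) :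
    |lam k| ≤ max |lam ⟨1, by omega⟩| |lam ⟨n - 1, by omega⟩| := by
  have h1 : (⟨1, by omega⟩ : Fin n) ≤ k :=
    Fin.le_def.2 (Nat.one_le_iff_ne_zero.2 fun h => hk (Fin.ext h))
  have h2 : k ≤ ⟨n - 1, by omega⟩ := Fin.le_def.2 (Nat.le_sub_one_of_lt k.2)
  rw [max_comm]
  exact abs_le_max_abs_abs (hmono h2) (hmono h1)

theorem Antitone.eq_of_apply_eq_apply_zero {n : ℕ} (hn : 1 < n) {lam : Fin n → ℝ}
    (hmono : Antitone lam) {j k : Fin n}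
    (hk : max |lam ⟨1, by omega⟩| |lam ⟨n - 1, by omega⟩| < |lam k|)
    (hj : lam j = lam ⟨0, by omega⟩) : j = k := by
  have eq_zero : ∀ i, max |lam ⟨1, by omega⟩| |lam ⟨n - 1, by omega⟩| < |lam i| →
      i = ⟨0, by omega⟩ := fun i hi => by
    by_contra hi0
    exact (hmono.abs_le_max_abs_of_ne_zero hn hi0).not_gt hi
  have hk0 := eq_zero k hk
  rw [hk0, eq_zero j (by rwa [hj, ← hk0])]

theorem Matrix.IsHermitian.abs_inner_toEuclideanLin_sub_le {n : ℕ} (hn : 1 < n)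
    {A : Matrix (Fin n) (Fin n) ℝ} (hAH : A.IsHermitian) {lam : Fin n → ℝ}
    (hmono : Antitone lam) (heig : ∃ e : Fin n ≃ Fin n, ∀ i, lam i = hAH.eigenvalues (e i))
    {ν : EuclideanSpace ℝ (Fin n)} (hν1 : ‖ν‖ = 1)
    (hν : toEuclideanLin A ν = lam ⟨0, by omega⟩ • ν) (x y : EuclideanSpace ℝ (Fin n)) :
    |⟪x, toEuclideanLin A y⟫ - lam ⟨0, by omega⟩ * (⟪x, ν⟫ * ⟪y, ν⟫)|
      ≤ max |lam ⟨1, by omega⟩| |lam ⟨n - 1, by omega⟩| * (‖x‖ * ‖y‖) := by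
  obtain ⟨e, he⟩ := heig
  have hT := isSymmetric_toEuclideanLin_iff.2 hAH
  have hb : ∀ i, toEuclideanLin A (hAH.eigenvectorBasis i)
      = hAH.eigenvalues i • hAH.eigenvectorBasis i := fun i => by
    ext j; exact congrFun (hAH.mulVec_eigenvectorBasis i) j
  have hsimple : ∀ i, max |lam ⟨1, by omega⟩| |lam ⟨n - 1, by omega⟩| < |hAH.eigenvalues i| →
      ∀ j, hAH.eigenvalues j = lam ⟨0, by omega⟩ → j = i := fun i hi j hj => by
    rw [← e.apply_symm_apply i, ← he] at hi
    rw [← e.apply_symm_apply j, ← he] at hj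
    simpa using hmono.eq_of_apply_eq_apply_zero hn hi hj
  have hν0 : ν ≠ 0 := fun h => by simp [h] at hν1
  exact abs_inner_map_sub_le hT hν hν1 (le_max_of_le_left (abs_nonneg _))
    (fun x hx => abs_inner_map_le_of_inner_eigenvector_eq_zero hAH.eigenvectorBasis hb hT hν hν0
      (le_max_of_le_left (abs_nonneg _)) hsimple hx) x y

noncomputable def euclideanIndicator {ι : Type*} (S : Finset ι) : EuclideanSpace ℝ ι :=
  WithLp.toLp 2 (Set.indicator (S : Set ι) 1)

section Indicator

variable {ι : Type*} [Fintype ι]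

theorem inner_euclideanIndicator_left (S : Finset ι) (v : EuclideanSpace ℝ ι) :
    ⟪euclideanIndicator S, v⟫ = ∑ i ∈ S, v i := by
  classical
  simp [euclideanIndicator, PiLp.inner_apply, Set.indicator_apply, Finset.sum_ite_mem]

theorem norm_euclideanIndicator (S : Finset ι) : ‖euclideanIndicator S‖ = √(#S : ℝ) := by
  rw [norm_eq_sqrt_real_inner, inner_euclideanIndicator_left]
  classical
  simp [euclideanIndicator, Set.indicator_apply]

theorem sum_sum_eq_inner_euclideanIndicator [DecidableEq ι] (A : Matrix ι ι ℝ)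
    (S T : Finset ι) :
    (∑ u ∈ S, ∑ w ∈ T, A u w)
      = ⟪euclideanIndicator S, toEuclideanLin A (euclideanIndicator T)⟫ := by
  rw [inner_euclideanIndicator_left]
  simp [euclideanIndicator, Matrix.mulVec, dotProduct, Set.indicator_apply, Finset.sum_ite_mem]

end Indicator

theorem Matrix.IsHermitian.abs_sum_sum_sub_le {n : ℕ} (hn : 1 < n)
    {A : Matrix (Fin n) (Fin n) ℝ} (hAH : A.IsHermitian) {lam : Fin n → ℝ}
    (hmono : Antitone lam) (heig : ∃ e : Fin n ≃ Fin n, ∀ i, lam i = hAH.eigenvalues (e i))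
    {ν : Fin n → ℝ} (hνnorm : ∑ i, ν i ^ 2 = 1) (hνeig : A *ᵥ ν = lam ⟨0, by omega⟩ • ν)
    (S T : Finset (Fin n)) :
    |∑ u ∈ S, ∑ w ∈ T, A u w - lam ⟨0, by omega⟩ * ((∑ u ∈ S, ν u) * ∑ w ∈ T, ν w)|
      ≤ max |lam ⟨1, by omega⟩| |lam ⟨n - 1, by omega⟩| * √(#S * #T) := by
  have hν1 : ‖WithLp.toLp 2 ν‖ = 1 := by
    simp [EuclideanSpace.norm_eq, hνnorm]
  have hν : toEuclideanLin A (WithLp.toLp 2 ν) = lam ⟨0, by omega⟩ • WithLp.toLp 2 ν := by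
    simp [hνeig]
  have := hAH.abs_inner_toEuclideanLin_sub_le hn hmono heig hν1 hν
    (euclideanIndicator S) (euclideanIndicator T)
  rwa [← sum_sum_eq_inner_euclideanIndicator, inner_euclideanIndicator_left,
    inner_euclideanIndicator_left, norm_euclideanIndicator, norm_euclideanIndicator,
    ← Real.sqrt_mul (Nat.cast_nonneg _)] at this

theorem sq_mul_card_mul_card_le_sum_mul_sum {ι : Type*} {ν : ι → ℝ} {νmin : ℝ}
    (hνmin : IsLeast (Set.range ν) νmin) (h0 : 0 ≤ νmin) (S T : Finset ι) :
    νmin ^ 2 * (#S * #T) ≤ (∑ u ∈ S, ν u) * ∑ w ∈ T, ν w := by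
  have hsum : ∀ U : Finset ι, νmin * #U ≤ ∑ u ∈ U, ν u := fun U => by
    simpa [mul_comm] using U.card_nsmul_le_sum ν νmin fun u _ => hνmin.2 ⟨u, rfl⟩
  calc νmin ^ 2 * (#S * #T) = (νmin * #S) * (νmin * #T) := by ring
    _ ≤ _ := mul_le_mul (hsum S) (hsum T) (by positivity)
      ((mul_nonneg h0 (Nat.cast_nonneg _)).trans (hsum S))

theorem mul_sq_sub_mul_le_mul_sq_sub_mul {a r q p : ℝ} (ha : 0 ≤ a) (hqp : q ≤ p)
    (hr : r ≤ 2 * a * q) : a * q ^ 2 - r * q ≤ a * p ^ 2 - r * p := by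
  nlinarith [mul_nonneg (sub_nonneg.2 hqp) (sub_nonneg.2 hr), mul_nonneg ha (sq_nonneg (p - q))]

/-- **Edges between neighbourhoods** (key step in the routing number bound):
`e(G(v), G(v′)) ≥ cn(λ₁cnν_min² − λ)`, where `e(S,T) = ∑_{u∈S,w∈T} A u w`. -/
theorem edges_between_neighborhoods {n : ℕ} (hn : 2 ≤ n)
    (G : SimpleGraph (Fin n)) [DecidableRel G.Adj]
    (c : ℝ)
    (hδ : (G.minDegree : ℝ) = c * n)
    (A : Matrix (Fin n) (Fin n) ℝ)
    (hAH : A.IsHermitian)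
    (lam : Fin n → ℝ) (hmono : Antitone lam)
    (heig : ∃ e : Fin n ≃ Fin n, ∀ i, lam i = hAH.eigenvalues (e i))
    (ν : Fin n → ℝ) (hνpos : ∀ i, 0 < ν i) (hνnorm : ∑ i, ν i ^ 2 = 1)
    (hνeig : A *ᵥ ν = lam ⟨0, by omega⟩ • ν)
    (lamAbs : ℝ)
    (hlamAbs : lamAbs = max |lam ⟨1, by omega⟩| |lam ⟨n - 1, by omega⟩|)
    (νmin : ℝ) (hνmin : IsLeast (Set.range ν) νmin)
    (hgap : 2 * lam ⟨0, by omega⟩ * νmin ^ 2 * c * n > lamAbs)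
    (v v' : Fin n) :
    (∑ u ∈ G.neighborFinset v, ∑ w ∈ G.neighborFinset v', A u w)
      ≥ c * n * (lam ⟨0, by omega⟩ * c * n * νmin ^ 2 - lamAbs) := by
  set S := G.neighborFinset v
  set T := G.neighborFinset v'
  have hmix := hAH.abs_sum_sum_sub_le hn hmono heig hνnorm hνeig S T
  rw [← hlamAbs] at hmix
  have hcn : 0 ≤ c * n := hδ ▸ Nat.cast_nonneg _
  have hdeg : ∀ u, c * n ≤ #(G.neighborFinset u) := fun u => by
    rw [← hδ, G.card_neighborFinset_eq_degree]
    exact_mod_cast G.minDegree_le_degree u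
  have hνmin0 : 0 ≤ νmin := by
    obtain ⟨i, rfl⟩ := hνmin.1
    exact (hνpos i).le
  have hlamAbs0 : 0 ≤ lamAbs := hlamAbs ▸ le_max_of_le_left (abs_nonneg _)
  have hlam0 : 0 ≤ lam ⟨0, by omega⟩ := by nlinarith [mul_nonneg (sq_nonneg νmin) hcn]
  have hst : c * n ≤ √(#S * #T) := Real.le_sqrt_of_sq_le (by nlinarith [hdeg v, hdeg v'])
  calc ∑ u ∈ S, ∑ w ∈ T, A u w
      ≥ lam ⟨0, by omega⟩ * ((∑ u ∈ S, ν u) * ∑ w ∈ T, ν w) - lamAbs * √(#S * #T) := by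
        linarith [(abs_le.1 hmix).1]
    _ ≥ lam ⟨0, by omega⟩ * νmin ^ 2 * √(#S * #T) ^ 2 - lamAbs * √(#S * #T) := by
        rw [Real.sq_sqrt (by positivity)]
        linarith [mul_le_mul_of_nonneg_left
          (sq_mul_card_mul_card_le_sum_mul_sum hνmin hνmin0 S T) hlam0]
    _ ≥ lam ⟨0, by omega⟩ * νmin ^ 2 * (c * n) ^ 2 - lamAbs * (c * n) :=
        mul_sq_sub_mul_le_mul_sq_sub_mul (by positivity) hst (by linarith)
    _ = c * n * (lam ⟨0, by omega⟩ * c * n * νmin ^ 2 - lamAbs) := by ring
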